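/- For the vacuum Finslerian Schwarzschild solution e^ν = 1 - 2M/(Kr), e^{-ϑ} = K - 2M/r, the Einstein tensor components G^t_t = e^{-ϑ}(ϑ'/r - 1/r²) + K/r² and G^r_r = e^{-ϑ}(-ν'/r - 1/r²) + K/r² both vanish identically for r > 2M/K. -/
import Mathlib


/-- For the vacuum Finslerian Schwarzschild solution e^{-ϑ} = K - 2M/r,
with ϑ'(r) = -(2M/r²)/(K - 2M/r) and ν'(r) = (2M/(Kr²))/(1 - 2M/(Kr)),
the Einstein tensor components G^t_t and G^r_r vanish for r > 2M/K. -/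
theorem vacuum_einstein_components_vanish (K M : ℝ) (hK : 0 < K) (hM : 0 < M) :
    ∀ r : ℝ, 2 * M / K < r →
      (K - 2 * M / r) * ((-(2 * M / r ^ 2) / (K - 2 * M / r)) / r - 1 / r ^ 2)
          + K / r ^ 2 = 0 ∧
      (K - 2 * M / r) * (-((2 * M / (K * r ^ 2)) / (1 - 2 * M / (K * r))) / r - 1 / r ^ 2)
          + K / r ^ 2 = 0 := by
  intro r hr
  have hr0 : 0 < r := lt_trans (div_pos (by linarith) hK) hr
  have h1 : 0 < K - 2 * M / r := by
    rw [sub_pos, div_lt_iff₀ hr0]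
    calc 2 * M = 2 * M / K * K := by field_simp
    _ < r * K := mul_lt_mul_of_pos_right hr hK
    _ = K * r := mul_comm r K
  have h2 : 0 < 1 - 2 * M / (K * r) := by
    rw [sub_pos, div_lt_one (mul_pos hK hr0)]
    have h3 : (K - 2 * M / r) * r > 0 := mul_pos h1 hr0
    rw [sub_mul, div_mul_cancel₀ _ hr0.ne'] at h3
    linarith
  have hKr : 2 * M < K * r := by
    have h3 := mul_pos h1 hr0
    rw [sub_mul, div_mul_cancel₀ _ hr0.ne'] at h3
    linarith
  have h4 : K * r - 2 * M ≠ 0 := by linarith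
  constructor <;> field_simp [h1.ne', h2.ne', h4] <;> ring
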